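/- arXiv:2006.00313 — 3 statements merged into one kernel-verified Lean document; each statement's English description precedes it below -/
import Mathlib

section
/- The sum Σ_{ℓ ∈ Z^∞_*} |ℓ|_1^3 / d(ℓ) is finite, where d(ℓ) := ∏_{i∈ℕ} (1 + |ℓ_i|^5 ⟨i⟩^5), given that Σ_{ℓ ∈ Z^∞_*} 1/∏_i (1 + ⟨i⟩^2 |ℓ_i|^2) < ∞. -/
/-!
On the support `S` of `ℓ` put `aᵢ = (i + 1)|ℓᵢ| ≥ i + 1`. Since `aᵢ ≥ 1`, each factor satisfies
`aᵢ³ (1 + aᵢ²) ≤ 2 (1 + aᵢ⁵)`, so `(∏ aᵢ)³ ∏ (1 + aᵢ²) ≤ 2^#S ∏ (1 + aᵢ⁵)`. The `aᵢ` dominate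
distinct positive integers, so any `#S - 1` of them multiply to at least `(#S - 1)!`; hence
`Σ aᵢ ≤ #S ∏ aᵢ / (#S - 1)!`, and `#S³ 2^#S / (#S - 1)!³` is bounded (by `32`). Thus the summand is
at most `32 ∏ (1 + aᵢ²)⁻¹`, which is summable by hypothesis.
-/

open Finset Nat

theorem Finset.card_factorial_le_prod_add_one (s : Finset ℕ) : (#s)! ≤ ∏ i ∈ s, (i + 1) := by
  induction s using Finset.induction_on_max with
  | empty => simp
  | insert a s hlt ih =>
    have ha : a ∉ s := fun h => (hlt a h).false
    have hcard : #s ≤ a := by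
      simpa using card_le_card (fun x hx => mem_range.mpr (hlt x hx) : s ⊆ range a)
    rw [card_insert_of_notMem ha, prod_insert ha, factorial_succ]
    exact Nat.mul_le_mul (by omega) ih

theorem Nat.succ_pow_three_mul_two_pow_le : ∀ m : ℕ, (m + 1) ^ 3 * 2 ^ (m + 1) ≤ 32 * m ! ^ 3
  | 0 => by norm_num
  | 1 => by norm_num
  | m + 2 => by
    have step : 2 * (m + 3) ^ 3 ≤ (m + 2) ^ 6 := by
      have : (m + 2) ^ 6 = 2 * (m + 3) ^ 3
          + (m ^ 6 + 12 * m ^ 5 + 60 * m ^ 4 + 158 * m ^ 3 + 222 * m ^ 2 + 138 * m + 10) := by ring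
      omega
    calc (m + 3) ^ 3 * 2 ^ (m + 3) = 2 * (m + 3) ^ 3 * 2 ^ (m + 2) := by ring
      _ ≤ (m + 2) ^ 6 * 2 ^ (m + 2) := Nat.mul_le_mul_right _ step
      _ = (m + 2) ^ 3 * ((m + 1 + 1) ^ 3 * 2 ^ (m + 1 + 1)) := by ring
      _ ≤ (m + 2) ^ 3 * (32 * (m + 1)! ^ 3) :=
        Nat.mul_le_mul_left _ (succ_pow_three_mul_two_pow_le (m + 1))
      _ = 32 * (m + 2)! ^ 3 := by rw [factorial_succ (m + 1)]; ring

section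
variable {S : Finset ℕ} {a : ℕ → ℝ}

theorem Finset.sum_mul_factorial_le_card_mul_prod (ha : ∀ i ∈ S, (i : ℝ) + 1 ≤ a i) :
    (∑ i ∈ S, a i) * ((#S - 1)! : ℝ) ≤ #S * ∏ i ∈ S, a i := by
  have ha0 : ∀ i ∈ S, 0 ≤ a i := fun i hi => by linarith [ha i hi, (i.cast_nonneg : (0 : ℝ) ≤ i)]
  have term_le (i) (hi : i ∈ S) : a i * ((#S - 1)! : ℝ) ≤ ∏ j ∈ S, a j := by
    rw [← mul_prod_erase S a hi, ← card_erase_of_mem hi]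
    refine mul_le_mul_of_nonneg_left ?_ (ha0 i hi)
    calc ((#(S.erase i))! : ℝ) ≤ ∏ j ∈ S.erase i, ((j : ℝ) + 1) := by
          exact_mod_cast (S.erase i).card_factorial_le_prod_add_one
      _ ≤ ∏ j ∈ S.erase i, a j :=
          prod_le_prod (fun j _ => by positivity) fun j hj => ha j (mem_of_mem_erase hj)
  calc (∑ i ∈ S, a i) * ((#S - 1)! : ℝ) = ∑ i ∈ S, a i * ((#S - 1)! : ℝ) := sum_mul ..
    _ ≤ ∑ _i ∈ S, ∏ j ∈ S, a j := sum_le_sum term_le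
    _ = #S * ∏ i ∈ S, a i := by rw [sum_const, nsmul_eq_mul]

theorem pow_three_mul_one_add_sq_le {x : ℝ} (hx : 1 ≤ x) :
    x ^ 3 * (1 + x ^ 2) ≤ 2 * (1 + x ^ 5) := by
  nlinarith [pow_le_pow_right₀ hx (show 3 ≤ 5 by norm_num)]

theorem Finset.sum_pow_three_mul_prod_le (ha : ∀ i ∈ S, (i : ℝ) + 1 ≤ a i) :
    (∑ i ∈ S, a i) ^ 3 * ∏ i ∈ S, (1 + a i ^ 2) ≤ 32 * ∏ i ∈ S, (1 + a i ^ 5) := by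
  have ha1 : ∀ i ∈ S, 1 ≤ a i := fun i hi => by linarith [ha i hi, (i.cast_nonneg : (0 : ℝ) ≤ i)]
  have hfac : (0 : ℝ) < ((#S - 1)! : ℝ) ^ 3 := by positivity
  have prod_le : (∏ i ∈ S, a i) ^ 3 * ∏ i ∈ S, (1 + a i ^ 2) ≤ 2 ^ #S * ∏ i ∈ S, (1 + a i ^ 5) := by
    rw [← prod_pow, ← prod_mul_distrib, ← prod_const, ← prod_mul_distrib]
    exact prod_le_prod (fun i hi => by have := ha1 i hi; positivity)
      fun i hi => pow_three_mul_one_add_sq_le (ha1 i hi)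
  have card_le : (#S : ℝ) ^ 3 * 2 ^ #S ≤ 32 * ((#S - 1)! : ℝ) ^ 3 := by
    rcases S.eq_empty_or_nonempty with rfl | hS
    · norm_num
    · obtain ⟨m, hm⟩ := Nat.exists_eq_add_one_of_ne_zero (card_pos.mpr hS).ne'
      rw [hm, Nat.add_sub_cancel]
      exact_mod_cast m.succ_pow_three_mul_two_pow_le
  rw [← mul_le_mul_iff_left₀ hfac]
  calc ((∑ i ∈ S, a i) ^ 3 * ∏ i ∈ S, (1 + a i ^ 2)) * ((#S - 1)! : ℝ) ^ 3
      = ((∑ i ∈ S, a i) * ((#S - 1)! : ℝ)) ^ 3 * ∏ i ∈ S, (1 + a i ^ 2) := by ring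
    _ ≤ (#S * ∏ i ∈ S, a i) ^ 3 * ∏ i ∈ S, (1 + a i ^ 2) := by
      gcongr ?_ ^ 3 * _
      · exact mul_nonneg (sum_nonneg fun i hi => by linarith [ha1 i hi]) (by positivity)
      · exact S.sum_mul_factorial_le_card_mul_prod ha
    _ = (#S : ℝ) ^ 3 * ((∏ i ∈ S, a i) ^ 3 * ∏ i ∈ S, (1 + a i ^ 2)) := by ring
    _ ≤ (#S : ℝ) ^ 3 * (2 ^ #S * ∏ i ∈ S, (1 + a i ^ 5)) := by gcongr
    _ = (#S : ℝ) ^ 3 * 2 ^ #S * ∏ i ∈ S, (1 + a i ^ 5) := by ring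
    _ ≤ 32 * ((#S - 1)! : ℝ) ^ 3 * ∏ i ∈ S, (1 + a i ^ 5) := by
      gcongr
      exact prod_nonneg fun i hi => by have := ha1 i hi; positivity
    _ = (32 * ∏ i ∈ S, (1 + a i ^ 5)) * ((#S - 1)! : ℝ) ^ 3 := by ring

end

/-- `Σ_{ℓ ∈ Z^∞_*} |ℓ|₁³ / d(ℓ) < ∞`, with
`d(ℓ) = ∏_i (1 + |ℓ_i|⁵⟨i⟩⁵)`, given Bourgain's convergence
`Σ_ℓ ∏_i (1+⟨i⟩²|ℓ_i|²)⁻¹ < ∞`.  Positive indices are realized by the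
weight `i+1`. -/
theorem summable_ell_one_cubed_div_d
    (h : Summable (fun ℓ : ℕ →₀ ℤ =>
      (∏ i ∈ ℓ.support, (1 + ((i : ℝ) + 1) ^ 2 * |(ℓ i : ℝ)| ^ 2))⁻¹)) :
    Summable (fun ℓ : ℕ →₀ ℤ =>
      (∑ i ∈ ℓ.support, ((i : ℝ) + 1) * |(ℓ i : ℝ)|) ^ 3 /
        ∏ i ∈ ℓ.support, (1 + |(ℓ i : ℝ)| ^ 5 * ((i : ℝ) + 1) ^ 5)) := by
  refine (h.mul_left 32).of_nonneg_of_le (fun ℓ => by positivity) fun ℓ => ?_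
  have weight_le (i) (hi : i ∈ ℓ.support) : (i : ℝ) + 1 ≤ ((i : ℝ) + 1) * |(ℓ i : ℝ)| :=
    le_mul_of_one_le_right (by positivity) (by exact_mod_cast Int.one_le_abs (by simpa using hi))
  have key := ℓ.support.sum_pow_three_mul_prod_le weight_le
  rw [← div_eq_mul_inv, div_le_div_iff₀ (by positivity) (by positivity)]
  simpa only [mul_pow, mul_comm _ (|_| ^ 5)] using key
end

section
/- For every ρ > 0, the sum Σ_{ℓ ∈ Z^∞_*} e^{-ρ|ℓ|_η} converges and is bounded by C·exp(τ ln(τ/ρ) ρ^{-1/η}) for some constants C, τ = τ(η) > 0. -/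
/-! A finite partial sum of `e^{-ρ|ℓ|_η}` is bounded by the product over the coordinates `i` of
`∑_{k ∈ ℤ} e^{-a_i |k|} = 1 + 2 / (e^{a_i} - 1)`, where `a_i = ρ (i + 1)^η`. At most `ρ^{-1/η}`
coordinates have `a_i ≤ 1`, and each of their factors is at most `1 + 2/ρ`; every other factor is
at most `exp (4 e^{-a_i})`, and comparison with an integral gives
`∑_i e^{-ρ (i+1)^η} ≤ ∫_0^∞ e^{-ρ x^η} dx = ρ^{-1/η} Γ(1/η + 1)`. So the sum is at most
`exp (ρ^{-1/η} (log (1 + 2/ρ) + 4 Γ(1/η + 1)))`, which has the required shape with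
`τ = 3 exp (4 Γ(1/η + 1))` and `C = exp (τ η)`, because `log ρ ≤ η ρ^{1/η}`. -/

open scoped BigOperators

noncomputable def wnorm (η : ℝ) (ℓ : ℕ →₀ ℤ) : ℝ :=
  ∑ i ∈ ℓ.support, ((i : ℝ) + 1) ^ η * |(ℓ i : ℝ)|

open Finset Real MeasureTheory

theorem hasSum_exp_neg_mul_abs {a : ℝ} (ha : 0 < a) :
    HasSum (fun k : ℤ => exp (-(a * |(k : ℝ)|))) (1 + 2 / (exp a - 1)) := by
  have hgeom : HasSum (fun n : ℕ => exp (-a) ^ n) (1 - exp (-a))⁻¹ :=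
    hasSum_geometric_of_lt_one (exp_pos _).le (exp_lt_one_iff.mpr (by linarith))
  have hnat : HasSum (fun n : ℕ => exp (-(a * |((n : ℤ) : ℝ)|))) (1 - exp (-a))⁻¹ := by
    refine hgeom.congr_fun fun n => ?_
    rw [← exp_nat_mul]
    congr 1
    push_cast
    rw [abs_of_nonneg n.cast_nonneg]
    ring
  have hneg : HasSum (fun n : ℕ => exp (-(a * |((-((n : ℤ) + 1) : ℤ) : ℝ)|)))
      (exp (-a) * (1 - exp (-a))⁻¹) := by
    refine (hgeom.mul_left _).congr_fun fun n => ?_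
    rw [← pow_succ', ← exp_nat_mul]
    congr 1
    push_cast
    rw [abs_neg, abs_of_nonneg (by positivity)]
    ring
  convert HasSum.of_nat_of_neg_add_one (f := fun k : ℤ => exp (-(a * |(k : ℝ)|))) hnat hneg using 1
  have h1 : 0 < exp a - 1 := by linarith [add_one_le_exp a]
  have h2 : 0 < 1 - (exp a)⁻¹ := by linarith [exp_neg a ▸ exp_lt_one_iff.mpr (neg_neg_of_pos ha)]
  rw [exp_neg]
  field_simp
  ring

theorem sum_prod_le_prod_sum_image {κ β R : Type*} [Fintype κ] [DecidableEq κ] [DecidableEq β]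
    [CommSemiring R] [PartialOrder R] [IsOrderedRing R]
    (G : Finset (κ → β)) (f : κ → β → R) (hf : ∀ i b, 0 ≤ f i b) :
    ∑ g ∈ G, ∏ i, f i (g i) ≤ ∏ i, ∑ b ∈ G.image (· i), f i b := by
  rw [prod_univ_sum]
  exact sum_le_sum_of_subset_of_nonneg
    (fun g hg => Fintype.mem_piFinset.mpr fun i => mem_image_of_mem _ hg)
    fun g _ _ => prod_nonneg fun i _ => hf i _

theorem sum_exp_neg_sum_mul_abs_le_prod {ι : Type*} [DecidableEq ι] (w : ι → ℝ)
    (hw : ∀ i, 0 < w i) (F : Finset (ι →₀ ℤ)) :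
    ∑ ℓ ∈ F, exp (-∑ i ∈ ℓ.support, w i * |(ℓ i : ℝ)|)
      ≤ ∏ i ∈ F.biUnion (·.support), (1 + 2 / (exp (w i) - 1)) := by
  set s := F.biUnion (·.support)
  have hsupp : ∀ ℓ ∈ F, ℓ.support ⊆ s := fun ℓ hℓ => subset_biUnion_of_mem _ hℓ
  let h : s → ℤ → ℝ := fun i k => exp (-(w i * |(k : ℝ)|))
  let restrict : (ι →₀ ℤ) → s → ℤ := fun ℓ i => ℓ i
  have hterm : ∀ ℓ ∈ F,
      exp (-∑ i ∈ ℓ.support, w i * |(ℓ i : ℝ)|) = ∏ i : s, h i (restrict ℓ i) := by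
    intro ℓ hℓ
    rw [sum_subset (hsupp ℓ hℓ) fun i _ hi => by simp [Finsupp.notMem_support_iff.mp hi],
      ← sum_neg_distrib, exp_sum, ← prod_coe_sort]
  have hinj : Set.InjOn restrict F := by
    intro ℓ₁ h₁ ℓ₂ h₂ he
    ext i
    by_cases hi : i ∈ s
    · exact congrFun he ⟨i, hi⟩
    · rw [Finsupp.notMem_support_iff.mp fun h => hi (hsupp ℓ₁ h₁ h),
        Finsupp.notMem_support_iff.mp fun h => hi (hsupp ℓ₂ h₂ h)]
  calc ∑ ℓ ∈ F, exp (-∑ i ∈ ℓ.support, w i * |(ℓ i : ℝ)|)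
      = ∑ g ∈ F.image restrict, ∏ i : s, h i (g i) := by
        rw [sum_image hinj]; exact sum_congr rfl hterm
    _ ≤ ∏ i : s, ∑ k ∈ (F.image restrict).image (· i), h i k :=
        sum_prod_le_prod_sum_image _ h fun _ _ => (exp_pos _).le
    _ ≤ ∏ i : s, (1 + 2 / (exp (w i) - 1)) :=
        prod_le_prod (fun _ _ => sum_nonneg fun _ _ => (exp_pos _).le) fun i _ =>
          sum_le_hasSum _ (fun _ _ => (exp_pos _).le) (hasSum_exp_neg_mul_abs (hw i))
    _ = ∏ i ∈ s, (1 + 2 / (exp (w i) - 1)) :=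
        prod_coe_sort s fun i => 1 + 2 / (exp (w i) - 1)

theorem one_add_two_div_exp_sub_one_le {a : ℝ} (ha : 0 < a) :
    1 + 2 / (exp a - 1) ≤ 1 + 2 / a := by
  have : a ≤ exp a - 1 := by linarith [add_one_le_exp a]
  gcongr

theorem one_add_two_div_exp_sub_one_le_exp {a : ℝ} (ha : 1 ≤ a) :
    1 + 2 / (exp a - 1) ≤ exp (4 * exp (-a)) := by
  have h2 : 2 ≤ exp a := by linarith [add_one_le_exp a]
  have : 2 / (exp a - 1) ≤ 4 * exp (-a) := by
    rw [exp_neg, div_le_iff₀ (by linarith)]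
    field_simp
    linarith
  linarith [add_one_le_exp (4 * exp (-a))]

theorem log_one_add_two_div_add_le {ρ τ c : ℝ} (hρ : 0 < ρ) (hτ : 1 ≤ τ)
    (hc : log 3 + c ≤ log τ) :
    log (1 + 2 / ρ) + c ≤ τ * (log (τ / ρ) + max 0 (log ρ)) := by
  have hmax : log (ρ + 2) ≤ log 3 + max 0 (log ρ) := by
    rcases le_total ρ 1 with h | h
    · have := log_le_log (by linarith) (show ρ + 2 ≤ 3 by linarith)
      linarith [le_max_left 0 (log ρ)]
    · have := log_le_log (by linarith) (show ρ + 2 ≤ 3 * ρ by linarith)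
      rw [log_mul (by norm_num) hρ.ne'] at this
      linarith [le_max_right 0 (log ρ)]
  have hsplit : log (1 + 2 / ρ) = log (ρ + 2) - log ρ := by
    rw [← log_div (by linarith) hρ.ne']; congr 1; field_simp
  have hτρ : log (τ / ρ) = log τ - log ρ := log_div (by linarith) hρ.ne'
  have hpos : 0 ≤ log (τ / ρ) + max 0 (log ρ) := by
    rw [hτρ]; linarith [log_nonneg hτ, le_max_right 0 (log ρ)]
  nlinarith

section

variable {ρ η : ℝ}

theorem rpow_neg_one_div_mul_max_log_le (hρ : 0 < ρ) (hη : 0 < η) :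
    ρ ^ (-1 / η) * max 0 (log ρ) ≤ η := by
  have hlog : log ρ ≤ η * ρ ^ (1 / η) := by
    calc log ρ ≤ ρ ^ (1 / η) / (1 / η) := log_le_rpow_div hρ.le (one_div_pos.mpr hη)
      _ = η * ρ ^ (1 / η) := by field_simp
  have hmul : ρ ^ (-1 / η) * ρ ^ (1 / η) = 1 := by
    rw [← rpow_add hρ, neg_div, neg_add_cancel, rpow_zero]
  rcases le_total (log ρ) 0 with h | h
  · rw [max_eq_left h, mul_zero]; exact hη.le
  · rw [max_eq_right h]
    calc ρ ^ (-1 / η) * log ρ ≤ ρ ^ (-1 / η) * (η * ρ ^ (1 / η)) := by gcongr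
      _ = η := by rw [mul_left_comm, hmul, mul_one]

theorem card_filter_mul_rpow_le_one_le (hρ : 0 < ρ) (hη : 0 < η) (s : Finset ℕ) :
    (#(s.filter fun i : ℕ => ρ * ((i : ℝ) + 1) ^ η ≤ 1) : ℝ) ≤ ρ ^ (-1 / η) := by
  have hsub : s.filter (fun i : ℕ => ρ * ((i : ℝ) + 1) ^ η ≤ 1) ⊆ range ⌊ρ ^ (-1 / η)⌋₊ := by
    intro i hi
    rw [mem_filter] at hi
    rw [mem_range, Nat.lt_iff_add_one_le, Nat.le_floor_iff (by positivity), Nat.cast_add_one,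
      ← rpow_le_rpow_iff (by positivity) (by positivity) hη, ← rpow_mul hρ.le,
      div_mul_cancel₀ _ hη.ne', rpow_neg_one, ← one_div, le_div_iff₀ hρ, mul_comm]
    exact hi.2
  calc (#(s.filter fun i : ℕ => ρ * ((i : ℝ) + 1) ^ η ≤ 1) : ℝ)
      ≤ #(range ⌊ρ ^ (-1 / η)⌋₊) := by exact_mod_cast card_le_card hsub
    _ ≤ ρ ^ (-1 / η) := by rw [card_range]; exact Nat.floor_le (by positivity)

theorem sum_exp_neg_mul_rpow_le (hρ : 0 < ρ) (hη : 0 < η) (s : Finset ℕ) :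
    ∑ i ∈ s, exp (-(ρ * ((i : ℝ) + 1) ^ η)) ≤ ρ ^ (-1 / η) * Gamma (1 / η + 1) := by
  set f : ℝ → ℝ := fun x => exp (-ρ * x ^ η)
  have hanti : AntitoneOn f (Set.Ici 0) := fun x hx y _ hxy => by
    simp only [f, exp_le_exp, neg_mul, neg_le_neg_iff]
    gcongr
  set n := s.sup id + 1
  have hsn : s ⊆ range n := fun i hi => mem_range.mpr (Nat.lt_succ_of_le (le_sup (f := id) hi))
  calc ∑ i ∈ s, exp (-(ρ * ((i : ℝ) + 1) ^ η))
      ≤ ∑ i ∈ range n, f (0 + ((i + 1 : ℕ) : ℝ)) :=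
        sum_le_sum_of_subset_of_nonneg hsn (fun _ _ _ => (exp_pos _).le) |>.trans_eq
          (sum_congr rfl fun i _ => by simp [f])
    _ ≤ ∫ x in (0 : ℝ)..0 + n, f x := (hanti.mono Set.Icc_subset_Ici_self).sum_le_integral
    _ ≤ ∫ x in Set.Ioi 0, f x := by
        rw [zero_add, intervalIntegral.integral_of_le n.cast_nonneg]
        refine setIntegral_mono_set ?_ (ae_of_all _ fun _ => (exp_pos _).le)
          Set.Ioc_subset_Ioi_self.eventuallyLE
        exact (integrableOn_rpow_mul_exp_neg_mul_rpow (s := 0) (by norm_num) hη hρ).congr_fun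
          (fun x _ => by simp [f]) measurableSet_Ioi
    _ = ρ ^ (-1 / η) * Gamma (1 / η + 1) := integral_exp_neg_mul_rpow hη hρ

theorem prod_one_add_two_div_exp_sub_one_le (hρ : 0 < ρ) (hη : 0 < η)
    (s : Finset ℕ) :
    ∏ i ∈ s, (1 + 2 / (exp (ρ * ((i : ℝ) + 1) ^ η) - 1))
      ≤ exp (ρ ^ (-1 / η) * (log (1 + 2 / ρ) + 4 * Gamma (1 / η + 1))) := by
  set a : ℕ → ℝ := fun i => ρ * ((i : ℝ) + 1) ^ η
  have hρa : ∀ i, ρ ≤ a i := fun i =>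
    le_mul_of_one_le_right hρ.le (one_le_rpow (by linarith [i.cast_nonneg (α := ℝ)]) hη.le)
  have hfactor : ∀ i, 1 + 2 / (exp (a i) - 1)
      ≤ exp ((if a i ≤ 1 then log (1 + 2 / ρ) else 0) + 4 * exp (-a i)) := by
    intro i
    split_ifs with h
    · calc 1 + 2 / (exp (a i) - 1) ≤ 1 + 2 / a i :=
            one_add_two_div_exp_sub_one_le (hρ.trans_le (hρa i))
        _ ≤ 1 + 2 / ρ := by gcongr; exact hρa i
        _ = exp (log (1 + 2 / ρ)) := (exp_log (by positivity)).symm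
        _ ≤ _ := exp_le_exp.mpr (by linarith [exp_pos (-a i)])
    · simpa using one_add_two_div_exp_sub_one_le_exp (le_of_not_ge h)
  have hfactor_nonneg : ∀ i, 0 ≤ 1 + 2 / (exp (a i) - 1) := fun i => by
    have : 0 < exp (a i) - 1 := by linarith [add_one_le_exp (a i), hρ.trans_le (hρa i)]
    positivity
  have hlog : 0 ≤ log (1 + 2 / ρ) := log_nonneg (by linarith [div_pos two_pos hρ])
  have hcard := card_filter_mul_rpow_le_one_le hρ hη s
  have htail := sum_exp_neg_mul_rpow_le hρ hη s
  calc ∏ i ∈ s, (1 + 2 / (exp (a i) - 1))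
      ≤ ∏ i ∈ s, exp ((if a i ≤ 1 then log (1 + 2 / ρ) else 0) + 4 * exp (-a i)) :=
        prod_le_prod (fun i _ => hfactor_nonneg i) fun i _ => hfactor i
    _ = exp (#(s.filter fun i => a i ≤ 1) * log (1 + 2 / ρ) + 4 * ∑ i ∈ s, exp (-a i)) := by
        rw [← exp_sum, sum_add_distrib, sum_ite, sum_const_zero, add_zero, sum_const,
          nsmul_eq_mul, ← mul_sum]
    _ ≤ exp (ρ ^ (-1 / η) * (log (1 + 2 / ρ) + 4 * Gamma (1 / η + 1))) := by
        rw [exp_le_exp]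
        nlinarith

theorem sum_exp_neg_mul_wnorm_le (hρ : 0 < ρ) (hη : 0 < η) (F : Finset (ℕ →₀ ℤ)) :
    ∑ ℓ ∈ F, exp (-ρ * wnorm η ℓ)
      ≤ exp (ρ ^ (-1 / η) * (log (1 + 2 / ρ) + 4 * Gamma (1 / η + 1))) := by
  have hw : ∀ ℓ, -ρ * wnorm η ℓ = -∑ i ∈ ℓ.support, ρ * ((i : ℝ) + 1) ^ η * |(ℓ i : ℝ)| := by
    intro ℓ
    rw [wnorm, neg_mul, mul_sum]
    simp only [mul_assoc]
  simp_rw [hw]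
  exact (sum_exp_neg_sum_mul_abs_le_prod _ (fun i => by positivity) F).trans
    (prod_one_add_two_div_exp_sub_one_le hρ hη _)

end

/-- for every ρ > 0 the sum `Σ_{ℓ ∈ Z^∞_*} e^{-ρ|ℓ|_η}`
converges and is bounded by `C exp(τ ln(τ/ρ) ρ^{-1/η})` with C, τ = τ(η) > 0. -/
theorem sum_exp_weight_bound (η : ℝ) (hη : 0 < η) :
    ∃ C > (0 : ℝ), ∃ τ > (0 : ℝ), ∀ ρ : ℝ, 0 < ρ →
      Summable (fun ℓ : ℕ →₀ ℤ => Real.exp (-ρ * wnorm η ℓ)) ∧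
      ∑' ℓ : ℕ →₀ ℤ, Real.exp (-ρ * wnorm η ℓ) ≤
        C * Real.exp (τ * Real.log (τ / ρ) * ρ ^ (-(1 : ℝ) / η)) := by
  set c := 4 * Gamma (1 / η + 1)
  have hc : 0 ≤ c := by have := Gamma_pos_of_pos (by positivity : 0 < 1 / η + 1); positivity
  set τ := 3 * exp c
  have hτ : 1 ≤ τ := by linarith [one_le_exp hc]
  have hlogτ : log 3 + c ≤ log τ := by rw [log_mul (by norm_num) (exp_pos c).ne', log_exp]
  refine ⟨exp (τ * η), exp_pos _, τ, by positivity, fun ρ hρ => ?_⟩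
  have hpartial := sum_exp_neg_mul_wnorm_le hρ hη
  refine ⟨summable_of_sum_le (fun _ => (exp_pos _).le) hpartial,
    (Real.tsum_le_of_sum_le (fun _ => (exp_pos _).le) hpartial).trans ?_⟩
  rw [← exp_add, exp_le_exp]
  calc ρ ^ (-1 / η) * (log (1 + 2 / ρ) + c)
      ≤ ρ ^ (-1 / η) * (τ * (log (τ / ρ) + max 0 (log ρ))) := by
        gcongr; exact log_one_add_two_div_add_le hρ hτ hlogτ
    _ = τ * (ρ ^ (-1 / η) * max 0 (log ρ)) + τ * log (τ / ρ) * ρ ^ (-1 / η) := by ring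
    _ ≤ τ * η + τ * log (τ / ρ) * ρ ^ (-1 / η) := by
        gcongr; exact rpow_neg_one_div_mul_max_log_le hρ hη
end

section
/- Commutator of ∂_x³ with the lowering operator: let g ∈ H(T^∞_ρ × T_ρ) and define G := π_0^⊥ g(φ,x) ∂_x^{-1} (the operator of multiplication by g followed by anti-derivative, projected off the zero x-mode). Then [∂_x³, G] = 3 g_x ∂_x + R, where R := π_0^⊥(3 g_xx + g_xxx ∂_x^{-1}) − 3 π_0(g_x ∂_x), and for any 0 < ζ < ρ the remainder satisfies ‖R‖_{ρ−ζ} ≤ C ζ^{-3} |g|_ρ. -/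
open scoped BigOperators ENNReal Classical

noncomputable def wt (η σ : ℝ) (p : (ℕ →₀ ℤ) × ℤ) : ℝ :=
  Real.exp (σ * (wnorm η p.1 + |(p.2 : ℝ)|))

noncomputable def opNormE (σ m : ℝ) (R : ℤ → ℤ → ℂ) : ℝ≥0∞ :=
  ⨆ j' : ℤ, ∑' j : ℤ, ENNReal.ofReal
    (Real.exp (σ * |(j : ℝ) - (j' : ℝ)|) * ‖R j j'‖ *
      (max 1 |(j' : ℝ)|) ^ (-m))

noncomputable def mapNormE (η σ m : ℝ) (T : (ℕ →₀ ℤ) → ℤ → ℤ → ℂ) : ℝ≥0∞ :=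
  ∑' ℓ : ℕ →₀ ℤ, ENNReal.ofReal (Real.exp (σ * wnorm η ℓ)) * opNormE σ m (T ℓ)

/-- matrix of the operator `G = π₀^⊥ g ∂_x^{-1}` on zero-average functions,
from the Fourier coefficients `gc` of g. -/
noncomputable def Gmat (gc : (ℕ →₀ ℤ) × ℤ → ℂ) : (ℕ →₀ ℤ) → ℤ → ℤ → ℂ :=
  fun ℓ j j' =>
    if j ≠ 0 ∧ j' ≠ 0 then gc (ℓ, j - j') * (Complex.I * (j' : ℂ))⁻¹ else 0

/-- matrix of the remainder `R = π₀^⊥(3 g_xx + g_xxx ∂_x^{-1}) − 3π₀(g_x ∂_x)`,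
as an operator on zero-average functions. -/
noncomputable def Rmat (gc : (ℕ →₀ ℤ) × ℤ → ℂ) : (ℕ →₀ ℤ) → ℤ → ℤ → ℂ :=
  fun ℓ j j' =>
    if j ≠ 0 ∧ j' ≠ 0 then
      3 * (Complex.I * ((j : ℂ) - (j' : ℂ))) ^ 2 * gc (ℓ, j - j') +
        (Complex.I * ((j : ℂ) - (j' : ℂ))) ^ 3 * gc (ℓ, j - j') *
          (Complex.I * (j' : ℂ))⁻¹
    else 0

/-!
On Fourier modes `∂_x` is multiplication by `i j` and `G` has matrix entries
`ĝ(ℓ, j - j') / (i j')`, so the commutator identity is the expansion of `a³ - b³` in powers of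
`a - b = i (j - j')`. Since `|j'| ≥ 1`, each entry of `R` is at most `4 |j - j'|³ |ĝ(ℓ, j - j')|`,
and the cubic factor is paid for by the loss of analyticity: `d³ e^{-ζ d} ≤ 3! ζ^{-3}`.
As `R` is Toeplitz in `x`, its `B^{ρ-ζ}` norm is bounded by the `e^{ρ|d|}`-weighted `ℓ¹` norm of
`ĝ(ℓ, ·)`, and summing over `ℓ` gives `‖R‖_{ρ-ζ} ≤ 24 ζ^{-3} |g|_ρ`.
-/

theorem cube_sub_cube_mul_div {K : Type*} [Field K] {a b : K} (hb : b ≠ 0) (c : K) :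
    (a ^ 3 - b ^ 3) * (c * b⁻¹) =
      3 * (a - b) * c * b + (3 * (a - b) ^ 2 * c + (a - b) ^ 3 * c * b⁻¹) := by
  field_simp
  ring

theorem pow_le_factorial_div_pow_mul_exp {x ζ : ℝ} (hx : 0 ≤ x) (hζ : 0 < ζ) (n : ℕ) :
    x ^ n ≤ n.factorial / ζ ^ n * Real.exp (ζ * x) := by
  have h := Real.pow_div_factorial_le_exp _ (mul_nonneg hζ.le hx) n
  rw [div_le_iff₀ (by positivity), mul_pow] at h
  rw [div_mul_eq_mul_div, le_div_iff₀ (by positivity)]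
  linarith

theorem wnorm_nonneg (η : ℝ) (ℓ : ℕ →₀ ℤ) : 0 ≤ wnorm η ℓ :=
  Finset.sum_nonneg fun _ _ => mul_nonneg (Real.rpow_nonneg (by positivity) _) (abs_nonneg _)

theorem wt_mk (η σ : ℝ) (ℓ : ℕ →₀ ℤ) (d : ℤ) :
    wt η σ (ℓ, d) = Real.exp (σ * wnorm η ℓ) * Real.exp (σ * |(d : ℝ)|) := by
  rw [wt, mul_add, Real.exp_add]

theorem norm_Rmat_le (gc : (ℕ →₀ ℤ) × ℤ → ℂ) (ℓ : ℕ →₀ ℤ) (j j' : ℤ) :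
    ‖Rmat gc ℓ j j'‖ ≤ 4 * |((j - j' : ℤ) : ℝ)| ^ 3 * ‖gc (ℓ, j - j')‖ := by
  unfold Rmat
  split_ifs with h
  · rcases eq_or_ne j j' with rfl | hne
    · simp
    have hx : 1 ≤ |((j - j' : ℤ) : ℝ)| := by
      rw [← Int.cast_abs]
      exact_mod_cast Int.one_le_abs (sub_ne_zero.2 hne)
    set x := |((j - j' : ℤ) : ℝ)|
    have hnorm : ‖Complex.I * ((j : ℂ) - j')‖ = x := by
      rw [norm_mul, Complex.norm_I, one_mul, ← Int.cast_sub, Complex.norm_intCast]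
    have hinv : ‖(Complex.I * (j' : ℂ))⁻¹‖ ≤ 1 := by
      rw [norm_inv, norm_mul, Complex.norm_I, one_mul, Complex.norm_intCast]
      exact inv_le_one_of_one_le₀ (by exact_mod_cast Int.one_le_abs h.2)
    have hg := norm_nonneg (gc (ℓ, j - j'))
    calc _ ≤ 3 * x ^ 2 * ‖gc (ℓ, j - j')‖ + x ^ 3 * ‖gc (ℓ, j - j')‖ * 1 := by
          refine (norm_add_le _ _).trans (add_le_add (le_of_eq ?_) ?_)
          · rw [norm_mul, norm_mul, norm_pow, hnorm]
            norm_num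
          · rw [norm_mul, norm_mul, norm_pow, hnorm]
            gcongr
      _ ≤ 4 * x ^ 3 * ‖gc (ℓ, j - j')‖ := by
          have : x ^ 2 ≤ x ^ 3 := pow_le_pow_right₀ hx (by norm_num)
          nlinarith
  · simp only [norm_zero]
    positivity

theorem exp_mul_norm_Rmat_le {ρ ζ : ℝ} (hζ : 0 < ζ) (gc : (ℕ →₀ ℤ) × ℤ → ℂ)
    (ℓ : ℕ →₀ ℤ) (j j' : ℤ) :
    Real.exp ((ρ - ζ) * |((j - j' : ℤ) : ℝ)|) * ‖Rmat gc ℓ j j'‖ ≤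
      24 / ζ ^ 3 * (Real.exp (ρ * |((j - j' : ℤ) : ℝ)|) * ‖gc (ℓ, j - j')‖) := by
  set x := |((j - j' : ℤ) : ℝ)|
  have hcube := pow_le_factorial_div_pow_mul_exp (abs_nonneg _) hζ 3 (x := x)
  have hexp : Real.exp ((ρ - ζ) * x) * Real.exp (ζ * x) = Real.exp (ρ * x) := by
    rw [← Real.exp_add]
    ring_nf
  calc _ ≤ Real.exp ((ρ - ζ) * x) * (4 * x ^ 3 * ‖gc (ℓ, j - j')‖) := by
        gcongr
        exact norm_Rmat_le gc ℓ j j'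
    _ ≤ Real.exp ((ρ - ζ) * x) *
          (4 * (Nat.factorial 3 / ζ ^ 3 * Real.exp (ζ * x)) * ‖gc (ℓ, j - j')‖) := by
        gcongr
    _ = _ := by
        rw [← hexp, Nat.factorial]
        push_cast
        ring

theorem opNormE_le_of_toeplitz_bound {σ K : ℝ} (hK : 0 ≤ K) {R : ℤ → ℤ → ℂ} {a : ℤ → ℝ}
    (h : ∀ j j', Real.exp (σ * |((j - j' : ℤ) : ℝ)|) * ‖R j j'‖ ≤ K * a (j - j')) :
    opNormE σ 0 R ≤ ENNReal.ofReal K * ∑' d, ENNReal.ofReal (a d) := by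
  refine iSup_le fun j' => ?_
  calc _ ≤ ∑' j, ENNReal.ofReal K * ENNReal.ofReal (a (j - j')) := by
        refine ENNReal.tsum_le_tsum fun j => ?_
        rw [neg_zero, Real.rpow_zero, mul_one, ← ENNReal.ofReal_mul hK]
        refine ENNReal.ofReal_le_ofReal ?_
        simpa using h j j'
    _ = _ := by
        rw [ENNReal.tsum_mul_left]
        exact congrArg _ ((Equiv.subRight j').tsum_eq fun d => ENNReal.ofReal (a d))

theorem mapNormE_le_of_opNormE_le {η σ ρ m K : ℝ} (hσρ : σ ≤ ρ) (hK : 0 ≤ K)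
    {T : (ℕ →₀ ℤ) → ℤ → ℤ → ℂ} {gc : (ℕ →₀ ℤ) × ℤ → ℂ}
    (hsum : Summable fun p => wt η ρ p * ‖gc p‖)
    (hT : ∀ ℓ, opNormE σ m (T ℓ) ≤
      ENNReal.ofReal K * ∑' d : ℤ, ENNReal.ofReal (Real.exp (ρ * |(d : ℝ)|) * ‖gc (ℓ, d)‖)) :
    mapNormE η σ m T ≤ ENNReal.ofReal (K * ∑' p, wt η ρ p * ‖gc p‖) := by
  calc mapNormE η σ m T
      ≤ ∑' ℓ, ENNReal.ofReal (Real.exp (ρ * wnorm η ℓ)) * (ENNReal.ofReal K *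
          ∑' d : ℤ, ENNReal.ofReal (Real.exp (ρ * |(d : ℝ)|) * ‖gc (ℓ, d)‖)) := by
        refine ENNReal.tsum_le_tsum fun ℓ => mul_le_mul' ?_ (hT ℓ)
        exact ENNReal.ofReal_le_ofReal
          (Real.exp_le_exp.2 (mul_le_mul_of_nonneg_right hσρ (wnorm_nonneg η ℓ)))
    _ = ENNReal.ofReal K * ∑' p, ENNReal.ofReal (wt η ρ p * ‖gc p‖) := by
        rw [ENNReal.tsum_prod', ← ENNReal.tsum_mul_left]
        refine tsum_congr fun ℓ => ?_
        rw [mul_left_comm, ← ENNReal.tsum_mul_left]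
        congr 1
        refine tsum_congr fun d => ?_
        rw [wt_mk, mul_assoc]
        exact (ENNReal.ofReal_mul (Real.exp_nonneg _)).symm
    _ = _ := by
        rw [ENNReal.ofReal_mul hK]
        exact congrArg _ (ENNReal.ofReal_tsum_of_nonneg
          (fun p => mul_nonneg (Real.exp_nonneg _) (norm_nonneg _)) hsum).symm

/-- commutator of ∂_x³ with the lowering operator:
`[∂_x³, G] = 3 g_x ∂_x + R` (as an identity of matrix elements on the
zero-average modes), and `‖R‖_{ρ−ζ} ≤ C ζ^{-3} |g|_ρ` for 0 < ζ < ρ. -/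
theorem commutator_dxxx_lowering :
    ∃ C > (0 : ℝ), ∀ (η ρ : ℝ), 0 < η → 0 < ρ →
      ∀ gc : (ℕ →₀ ℤ) × ℤ → ℂ,
        Summable (fun p => wt η ρ p * ‖gc p‖) →
        (∀ (ℓ : ℕ →₀ ℤ) (j j' : ℤ), j ≠ 0 → j' ≠ 0 →
          ((Complex.I * (j : ℂ)) ^ 3 - (Complex.I * (j' : ℂ)) ^ 3) *
              Gmat gc ℓ j j' =
            3 * (Complex.I * ((j : ℂ) - (j' : ℂ))) * gc (ℓ, j - j') *
                (Complex.I * (j' : ℂ)) +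
              Rmat gc ℓ j j') ∧
        ∀ ζ : ℝ, 0 < ζ → ζ < ρ →
          mapNormE η (ρ - ζ) 0 (Rmat gc) ≤
            ENNReal.ofReal
              (C * ζ ^ (-(3 : ℝ)) * ∑' p : (ℕ →₀ ℤ) × ℤ, wt η ρ p * ‖gc p‖) := by
  refine ⟨24, by norm_num, fun η ρ _ _ gc hsum => ⟨fun ℓ j j' hj hj' => ?_, fun ζ hζ _ => ?_⟩⟩
  · simp only [Gmat, Rmat, if_pos (And.intro hj hj')]
    rw [mul_sub Complex.I]
    exact cube_sub_cube_mul_div (mul_ne_zero Complex.I_ne_zero (Int.cast_ne_zero.2 hj')) _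
  · have hζ3 : (24 : ℝ) * ζ ^ (-(3 : ℝ)) = 24 / ζ ^ 3 := by
      rw [Real.rpow_neg hζ.le, ← div_eq_mul_inv]
      norm_cast
    rw [hζ3]
    refine mapNormE_le_of_opNormE_le (by linarith) (by positivity) hsum fun ℓ => ?_
    exact opNormE_le_of_toeplitz_bound (by positivity) (exp_mul_norm_Rmat_le hζ gc ℓ)
end
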